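/- There is no set S of n points in ℤ² with n even such that S has exactly one point in each of n consecutive columns, exactly one point in each of n consecutive rows, and exactly one point in each of n consecutive standard diagonals (lines x + y = constant). In particular, no honeycomb array has an even number of dots, and there is no hexagonal permutation whose dots fill a tricentred Lee sphere's 2r+2 rows in each direction. -/

import Mathlib

/-!
Sum the three coordinates `x`, `y` and `x + y` over the `n` dots. A set of dots meeting each
of the `n` consecutive lines `f = a, …, a + n - 1` exactly once has `∑ f = n a + n (n - 1) / 2`,
so `∑ (x + y) = ∑ x + ∑ y` forces `2 (a + b - c) = 1 - n`, which is impossible for `n` even.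
-/

open Finset

theorem Finset.sum_eq_sum_of_card_eq_of_surjOn {α M : Type*} [DecidableEq M] [AddCommMonoid M]
    {S : Finset α} {T : Finset M} {f : α → M} (hcard : #S = #T)
    (hsurj : ∀ k ∈ T, ∃ p ∈ S, f p = k) : ∑ p ∈ S, f p = ∑ k ∈ T, k := by
  have himage : S.image f = T := by
    refine (eq_of_subset_of_card_le (fun k hk => ?_) ?_).symm
    · obtain ⟨p, hp, rfl⟩ := hsurj k hk
      exact mem_image_of_mem f hp
    · exact hcard ▸ card_image_le
  have hinj : Set.InjOn f S := injOn_of_card_image_eq (himage ▸ hcard.symm)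
  rw [← himage, sum_image hinj]

theorem Int.two_mul_sum_Ico_add (a : ℤ) (n : ℕ) :
    2 * ∑ k ∈ Ico a (a + n), k = n * (2 * a + n - 1) := by
  induction n with
  | zero => simp
  | succ m ih =>
    rw [Nat.cast_succ, ← add_assoc, Ico_add_one_right_eq_Icc, ← Ico_insert_right (by omega),
      sum_insert right_notMem_Ico, mul_add, ih]
    ring

theorem two_mul_sum_of_forall_exists_eq_of_mem_Icc {α : Type*} {S : Finset α} (f : α → ℤ)
    (a : ℤ) (h : ∀ k ∈ Icc a (a + #S - 1), ∃ p ∈ S, f p = k) :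
    2 * ∑ p ∈ S, f p = #S * (2 * a + #S - 1) := by
  rw [Icc_sub_one_right_eq_Ico] at h
  rw [sum_eq_sum_of_card_eq_of_surjOn (by simp) h, Int.two_mul_sum_Ico_add]

/-- There is no hexagonal permutation with an even number of dots: no set of `n`
points (with `n` even, `n > 0`) hits `n` consecutive columns, rows and standard
diagonals exactly once each. -/
theorem no_even_hexagonal_permutation (n : ℕ) (hpos : 0 < n) (hn : Even n) :
    ¬ ∃ (S : Finset (ℤ × ℤ)) (a b c : ℤ),
      S.card = n ∧
      (∀ k ∈ Finset.Icc a (a + n - 1), ∃! p, p ∈ S ∧ p.1 = k) ∧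
      (∀ k ∈ Finset.Icc b (b + n - 1), ∃! p, p ∈ S ∧ p.2 = k) ∧
      (∀ k ∈ Finset.Icc c (c + n - 1), ∃! p, p ∈ S ∧ p.1 + p.2 = k) := by
  rintro ⟨S, a, b, c, rfl, hcol, hrow, hdiag⟩
  have hx := two_mul_sum_of_forall_exists_eq_of_mem_Icc Prod.fst a fun k hk => (hcol k hk).exists
  have hy := two_mul_sum_of_forall_exists_eq_of_mem_Icc Prod.snd b fun k hk => (hrow k hk).exists
  have hxy := two_mul_sum_of_forall_exists_eq_of_mem_Icc (fun p => p.1 + p.2) c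
    fun k hk => (hdiag k hk).exists
  have key : (#S : ℤ) * ((2 * a + #S - 1) + (2 * b + #S - 1)) = #S * (2 * c + #S - 1) := by
    rw [← hxy, sum_add_distrib, mul_add, mul_add, ← hx, ← hy]
  have hcancel := mul_left_cancel₀ (by positivity) key
  obtain ⟨m, hm⟩ := hn
  omega
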